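/- arXiv:2203.15530 — 6 statements merged into one kernel-verified Lean document; each statement's English description precedes it below -/
import Mathlib

section
/- Let γ > 0. For every t > 0 one has tanh(γ/2) − coth(γt) < 0, so the function ψ(t) = coth(γt) + (sinh(γt))^{−2}/(tanh(γ/2) − coth(γt)) is well defined on (0,∞). Moreover ψ is strictly increasing on (0,∞), ψ(1/2) = 0, and consequently ψ(t) ≥ ψ(1) > 0 for all t ≥ 1. -/
open MeasureTheory

/-- The function `ψ(t) = coth(γt) + (sinh(γt))^{−2}/(tanh(γ/2) − coth(γt))`. -/
noncomputable def psi (γ t : ℝ) : ℝ :=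
  Real.cosh (γ * t) / Real.sinh (γ * t) +
    ((Real.sinh (γ * t)) ^ 2)⁻¹ /
      (Real.tanh (γ / 2) - Real.cosh (γ * t) / Real.sinh (γ * t))

/-!
Write `a = tanh(γ/2)` and `c = coth(γt)`. Since `sinh⁻² = coth² - 1`, `ψ` is the Möbius
transformation `c ↦ (1 - a c)/(c - a)` of `c`, whose determinant `a² - 1` is negative, so it is
strictly decreasing for `c > a`; and `c > 1 > a` is strictly decreasing in `t`. At `t = 1/2`
we have `c = 1/a`, so the numerator vanishes.
-/

open Real Set

lemma one_lt_cosh_div_sinh {x : ℝ} (hx : 0 < x) : 1 < cosh x / sinh x := by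
  rw [one_lt_div (sinh_pos_iff.mpr hx)]
  exact sinh_lt_cosh x

lemma tanh_lt_cosh_div_sinh (y : ℝ) {x : ℝ} (hx : 0 < x) : tanh y < cosh x / sinh x :=
  (tanh_lt_one y).trans (one_lt_cosh_div_sinh hx)

lemma cosh_div_sinh_strictAntiOn : StrictAntiOn (fun x => cosh x / sinh x) (Ioi 0) := by
  intro u hu v hv huv
  rw [div_lt_div_iff₀ (sinh_pos_iff.mpr hv) (sinh_pos_iff.mpr hu)]
  have h : 0 < sinh (v - u) := sinh_pos_iff.mpr (sub_pos.mpr huv)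
  rw [sinh_sub] at h
  linarith

lemma mobius_strictAntiOn {a : ℝ} (ha : a ^ 2 < 1) :
    StrictAntiOn (fun c => (1 - a * c) / (c - a)) (Ioi a) := by
  intro c₁ hc₁ c₂ hc₂ hc
  rw [div_lt_div_iff₀ (sub_pos.mpr hc₂) (sub_pos.mpr hc₁)]
  nlinarith [mul_pos (sub_pos.mpr ha) (sub_pos.mpr hc)]

lemma psi_eq_mobius {γ t : ℝ} (h : 0 < γ * t) :
    psi γ t = (1 - tanh (γ / 2) * (cosh (γ * t) / sinh (γ * t))) /
      (cosh (γ * t) / sinh (γ * t) - tanh (γ / 2)) := by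
  have hs : sinh (γ * t) ≠ 0 := (sinh_pos_iff.mpr h).ne'
  have hinv : (sinh (γ * t) ^ 2)⁻¹ = (cosh (γ * t) / sinh (γ * t)) ^ 2 - 1 := by
    field_simp
    linarith [cosh_sq_sub_sinh_sq (γ * t)]
  have hlt := tanh_lt_cosh_div_sinh (γ / 2) h
  rw [psi, hinv]
  generalize cosh (γ * t) / sinh (γ * t) = c at hlt ⊢
  have hne : c - tanh (γ / 2) ≠ 0 := (sub_pos.mpr hlt).ne'
  have hne' : tanh (γ / 2) - c ≠ 0 := (sub_neg.mpr hlt).ne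
  field_simp
  ring

lemma psi_strictMonoOn {γ : ℝ} (hγ : 0 < γ) : StrictMonoOn (psi γ) (Ioi 0) := by
  intro s (hs : 0 < s) t (ht : 0 < t) hst
  rw [psi_eq_mobius (mul_pos hγ hs), psi_eq_mobius (mul_pos hγ ht)]
  exact mobius_strictAntiOn (tanh_sq_lt_one _)
    (tanh_lt_cosh_div_sinh _ (mul_pos hγ ht)) (tanh_lt_cosh_div_sinh _ (mul_pos hγ hs))
    (cosh_div_sinh_strictAntiOn (mul_pos hγ hs) (mul_pos hγ ht)
      (mul_lt_mul_of_pos_left hst hγ))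

lemma psi_one_half (γ : ℝ) : psi γ (1 / 2) = 0 := by
  rw [psi, mul_one_div, tanh_eq_sinh_div_cosh]
  rcases eq_or_ne (sinh (γ / 2)) 0 with hs | hs
  · simp [hs]
  have hc : cosh (γ / 2) ≠ 0 := (cosh_pos _).ne'
  field_simp
  rw [show sinh (γ / 2) ^ 2 - cosh (γ / 2) ^ 2 = -1 by linarith [cosh_sq_sub_sinh_sq (γ / 2)]]
  ring

/-- For `γ > 0`: `tanh(γ/2) − coth(γt) < 0` for all `t > 0` (so `ψ` is well defined on
`(0,∞)`), `ψ` is strictly increasing on `(0,∞)`, `ψ(1/2) = 0`, and consequently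
`ψ(t) ≥ ψ(1) > 0` for all `t ≥ 1`. -/
theorem psi_monotone_positive (γ : ℝ) (hγ : 0 < γ) :
    (∀ t > (0 : ℝ), Real.tanh (γ / 2) - Real.cosh (γ * t) / Real.sinh (γ * t) < 0) ∧
    StrictMonoOn (psi γ) (Set.Ioi 0) ∧
    psi γ (1 / 2) = 0 ∧
    (∀ t ≥ (1 : ℝ), psi γ t ≥ psi γ 1) ∧
    0 < psi γ 1 := by
  have hmono := psi_strictMonoOn hγ
  have hone : (1 : ℝ) ∈ Ioi 0 := mem_Ioi.mpr one_pos
  refine ⟨fun t ht => sub_neg.mpr (tanh_lt_cosh_div_sinh _ (mul_pos hγ ht)), hmono,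
    psi_one_half γ, fun t ht => ?_, ?_⟩
  · exact hmono.monotoneOn hone (zero_lt_one.trans_le ht) ht
  · have half_lt_one := hmono (by norm_num : (1 / 2 : ℝ) ∈ Ioi 0) hone (by norm_num)
    rwa [psi_one_half] at half_lt_one
end

section
/- Let a > 0, A > 0 and B > 0 be real numbers. Then there exists a constant C > 0 (depending only on a, A, B) such that for all s ≥ 0: ∫_1^∞ exp(−At − Bs²/t) · t^{a−1} dt ≤ C · exp(−min(A, B)·s/2). -/
/-!
Split at `t = s`: for `t ≥ s` the term `A t` alone dominates `A t / 2 + A s / 2`, while for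
`t < s` the term `B s² / t` dominates `B s`. Hence for every `t > 0` the integrand is at most
`exp (-min A B * s / 2) * t ^ (a - 1) * exp (-(A / 2) t)`, whose integral over `(0, ∞)` is
`(2 / A) ^ a * Γ(a)`.
-/

open MeasureTheory Real Set

lemma exp_neg_mul_sub_sq_div_le {A B s t : ℝ} (hA : 0 ≤ A) (hB : 0 ≤ B) (hs : 0 ≤ s)
    (ht : 0 < t) :
    exp (-A * t - B * s ^ 2 / t) ≤ exp (-min A B * s / 2) * exp (-(A / 2 * t)) := by
  rw [← exp_add, exp_le_exp]
  have hmin_A : min A B ≤ A := min_le_left A B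
  have hmin_B : min A B ≤ B := min_le_right A B
  rcases le_or_gt s t with hst | hts
  · have : 0 ≤ B * s ^ 2 / t := by positivity
    nlinarith
  · have hBs : B * s ≤ B * s ^ 2 / t := by
      rw [le_div_iff₀ ht]
      nlinarith [mul_nonneg hB hs]
    nlinarith

lemma integrableOn_rpow_sub_one_mul_exp_neg_mul_Ioi {a r : ℝ} (ha : 0 < a) (hr : 0 < r) :
    IntegrableOn (fun t : ℝ => t ^ (a - 1) * exp (-(r * t))) (Ioi 0) := by
  simpa only [rpow_one, neg_mul] using
    integrableOn_rpow_mul_exp_neg_mul_rpow (s := a - 1) (by linarith) one_pos hr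

/-- For `a, A, B > 0` there is `C > 0` (depending only on `a, A, B`) such that for
all `s ≥ 0`: `∫_1^∞ exp(−At − Bs²/t) t^{a−1} dt ≤ C exp(−min(A,B) s/2)`. -/
theorem integral_exp_decay_bound (a A B : ℝ) (ha : 0 < a) (hA : 0 < A) (hB : 0 < B) :
    ∃ C > (0 : ℝ), ∀ s ≥ (0 : ℝ),
      ∫ t in Set.Ioi (1 : ℝ), Real.exp (-A * t - B * s ^ 2 / t) * t ^ (a - 1) ≤
        C * Real.exp (-min A B * s / 2) := by
  have hA2 : 0 < A / 2 := half_pos hA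
  refine ⟨(1 / (A / 2)) ^ a * Gamma a, by positivity, fun s hs => ?_⟩
  set E := exp (-min A B * s / 2)
  have hg : IntegrableOn (fun t => E * (t ^ (a - 1) * exp (-(A / 2 * t)))) (Ioi 0) :=
    (integrableOn_rpow_sub_one_mul_exp_neg_mul_Ioi ha hA2).const_mul E
  have hg_nonneg : ∀ t ∈ Ioi (0 : ℝ), 0 ≤ E * (t ^ (a - 1) * exp (-(A / 2 * t))) :=
    fun t ht => by have : 0 < t := ht; positivity
  calc ∫ t in Ioi 1, exp (-A * t - B * s ^ 2 / t) * t ^ (a - 1)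
      ≤ ∫ t in Ioi 1, E * (t ^ (a - 1) * exp (-(A / 2 * t))) := by
        refine integral_mono_of_nonneg ?_ (hg.mono_set (Ioi_subset_Ioi zero_le_one)) ?_
        · filter_upwards [self_mem_ae_restrict measurableSet_Ioi] with t (ht : 1 < t)
          positivity
        · filter_upwards [self_mem_ae_restrict measurableSet_Ioi] with t (ht : 1 < t)
          have hbound := exp_neg_mul_sub_sq_div_le hA.le hB.le hs (zero_lt_one.trans ht)
          calc exp (-A * t - B * s ^ 2 / t) * t ^ (a - 1)
              ≤ E * exp (-(A / 2 * t)) * t ^ (a - 1) := by gcongr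
            _ = E * (t ^ (a - 1) * exp (-(A / 2 * t))) := by ring
    _ ≤ ∫ t in Ioi 0, E * (t ^ (a - 1) * exp (-(A / 2 * t))) :=
        setIntegral_mono_set hg (ae_restrict_of_forall_mem measurableSet_Ioi hg_nonneg)
          (Ioi_subset_Ioi zero_le_one).eventuallyLE
    _ = (1 / (A / 2)) ^ a * Gamma a * E := by
        rw [integral_const_mul, integral_rpow_mul_exp_neg_mul_Ioi ha hA2, mul_comm]
end

section
/- Let a > 0 and let d ≥ 1 be an integer. There exists a constant C > 0 depending only on a such that the following holds: for every real v ≥ 2 and every nondecreasing function ρ : ℝ → [0,∞), setting K = ⌊log₂ v⌋, one has v^a · ∫_0^1 ( e^{−tv} + ∑_{k=1}^K e^{−tv/2^k} · e^{−ρ(2^k)²/(2d)} + e^{−ρ(v)²/(2d)} ) t^{a−1} dt ≤ C · ( 1 + ∫_1^v s^{a−1} · e^{−ρ(s)²/(2d)} ds ). -/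
/-!
Write `e(s) = exp (-ρ(s)² / (2d))`, an antitone function. Integrating termwise in `t`, a term of
rate `λ` contributes at most `Γ(a) / λ^a`, so the left side is at most
`Γ(a) + Γ(a) ∑_k 2^{ka} e(2^k) + v^a e(v) / a`. Because `e` is antitone, on every dyadic block
`(w/2, w]` we have `∫ s^{a-1} e(s) ds ≥ e(w) (w^a - (w/2)^a) / a = c w^a e(w)` with
`c = (1 - 2^{-a}) / a`. The blocks `(2^{k-1}, 2^k]`, `k ≤ ⌊log₂ v⌋`, and the single block `(v/2, v]`
lie in `(1, v]`, so both `∑_k 2^{ka} e(2^k)` and `v^a e(v)` are at most `c⁻¹ ∫_1^v s^{a-1} e(s) ds`.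
-/

open MeasureTheory Real Set

lemma pow_natFloor_logb_le {b x : ℝ} (hb : 1 < b) (hx : 1 ≤ x) : b ^ ⌊logb b x⌋₊ ≤ x := by
  rw [← rpow_natCast, ← le_logb_iff_rpow_le hb (by linarith)]
  exact Nat.floor_le (logb_nonneg hb hx)

lemma antitone_exp_neg_sq_div {ρ : ℝ → ℝ} (hρ : Monotone ρ) (hρ0 : ∀ s, 0 ≤ ρ s) {c : ℝ}
    (hc : 0 ≤ c) : Antitone fun s => exp (-ρ s ^ 2 / c) := fun _ _ hst =>
  exp_le_exp.2 <| div_le_div_of_nonneg_right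
    (neg_le_neg (pow_le_pow_left₀ (hρ0 _) (hρ hst) 2)) hc

lemma rpow_mul_setIntegral_exp_neg_mul_mul_rpow_le_Gamma {a l : ℝ} (ha : 0 < a) (hl : 0 < l)
    {s : Set ℝ} (hs : s ⊆ Ioi 0) :
    l ^ a * ∫ t in s, exp (-t * l) * t ^ (a - 1) ≤ Gamma a := by
  have hint : IntegrableOn (fun t => t ^ (a - 1) * exp (-(l * t))) (Ioi 0) := by
    simpa [rpow_one, neg_mul] using
      integrableOn_rpow_mul_exp_neg_mul_rpow (p := 1) (by linarith : -1 < a - 1) one_pos hl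
  have hmono : ∫ t in s, t ^ (a - 1) * exp (-(l * t)) ≤ (1 / l) ^ a * Gamma a := by
    rw [← integral_rpow_mul_exp_neg_mul_Ioi ha hl]
    refine setIntegral_mono_set hint ?_ hs.eventuallyLE
    filter_upwards [self_mem_ae_restrict measurableSet_Ioi] with t ht
    exact mul_nonneg (rpow_nonneg (le_of_lt ht) _) (exp_pos _).le
  calc l ^ a * ∫ t in s, exp (-t * l) * t ^ (a - 1)
      = l ^ a * ∫ t in s, t ^ (a - 1) * exp (-(l * t)) := by
        simp_rw [mul_comm (exp _), neg_mul, mul_comm l]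
    _ ≤ l ^ a * ((1 / l) ^ a * Gamma a) := by gcongr
    _ = Gamma a := by
        rw [← mul_assoc, ← mul_rpow hl.le (by positivity), mul_one_div_cancel hl.ne', one_rpow,
          one_mul]

lemma rpow_mul_sum_mul_setIntegral_exp_le_Gamma_mul_sum {a v : ℝ} (ha : 0 < a) (hv : 0 < v)
    (S : Finset ℕ) {e : ℕ → ℝ} (he : ∀ k, 0 ≤ e k) :
    v ^ a * ∑ k ∈ S, e k * ∫ t in Ioc (0 : ℝ) 1, exp (-t * (v / 2 ^ k)) * t ^ (a - 1) ≤
      Gamma a * ∑ k ∈ S, ((2 : ℝ) ^ k) ^ a * e k := by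
  rw [Finset.mul_sum, Finset.mul_sum]
  refine Finset.sum_le_sum fun k _ => ?_
  have hJ := rpow_mul_setIntegral_exp_neg_mul_mul_rpow_le_Gamma ha
    (by positivity : 0 < v / 2 ^ k) (s := Ioc 0 1) Ioc_subset_Ioi_self
  set J := ∫ t in Ioc (0 : ℝ) 1, exp (-t * (v / 2 ^ k)) * t ^ (a - 1)
  calc v ^ a * (e k * J) = ((2 : ℝ) ^ k) ^ a * e k * ((v / 2 ^ k) ^ a * J) := by
        rw [div_rpow hv.le (by positivity)]
        field_simp
    _ ≤ ((2 : ℝ) ^ k) ^ a * e k * Gamma a := by gcongr; exact mul_nonneg (by positivity) (he k)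
    _ = Gamma a * (((2 : ℝ) ^ k) ^ a * e k) := mul_comm _ _

lemma integrableOn_Ioc_zero_one_mul_rpow {r : ℝ} (hr : -1 < r) {φ : ℝ → ℝ} (hφ : Continuous φ) :
    IntegrableOn (fun t => φ t * t ^ r) (Ioc 0 1) :=
  (intervalIntegrable_iff_integrableOn_Ioc_of_le zero_le_one).1 <|
    (intervalIntegral.intervalIntegrable_rpow' hr).continuousOn_mul hφ.continuousOn

lemma setIntegral_Ioc_zero_one_dyadic_sum_mul_rpow {r : ℝ} (hr : -1 < r) (v : ℝ) (S : Finset ℕ)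
    (c : ℕ → ℝ) (b : ℝ) :
    ∫ t in Ioc (0 : ℝ) 1, (exp (-t * v) + ∑ k ∈ S, exp (-t * v / 2 ^ k) * c k + b) * t ^ r =
      (∫ t in Ioc (0 : ℝ) 1, exp (-t * v) * t ^ r) +
        ∑ k ∈ S, c k * (∫ t in Ioc (0 : ℝ) 1, exp (-t * (v / 2 ^ k)) * t ^ r) + b / (r + 1) := by
  have hexp : IntegrableOn (fun t => exp (-t * v) * t ^ r) (Ioc 0 1) :=
    integrableOn_Ioc_zero_one_mul_rpow hr (by fun_prop)
  have hsum : ∀ k ∈ S, IntegrableOn (fun t => exp (-t * v / 2 ^ k) * t ^ r * c k) (Ioc 0 1) :=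
    fun k _ => (integrableOn_Ioc_zero_one_mul_rpow hr (by fun_prop)).mul_const _
  have hpow : ∫ t in Ioc (0 : ℝ) 1, t ^ r = 1 / (r + 1) := by
    rw [← intervalIntegral.integral_of_le zero_le_one, integral_rpow (.inl hr),
      zero_rpow (by linarith), one_rpow, sub_zero]
  simp_rw [add_mul, Finset.sum_mul, mul_right_comm _ (c _), ← mul_div_assoc]
  rw [integral_add, integral_add hexp (integrable_finsetSum _ hsum), integral_finsetSum _ hsum,
    integral_const_mul, hpow]
  · simp_rw [integral_mul_const, mul_comm (c _), div_eq_mul_one_div b]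
  · exact hexp.add (integrable_finsetSum _ hsum)
  · exact integrableOn_Ioc_zero_one_mul_rpow hr continuous_const

section DyadicBlocks

variable {a r u w : ℝ} {f : ℝ → ℝ}

lemma intervalIntegrable_rpow_mul_of_antitone (hf : Antitone f) (hu : 0 < u) (hw : 0 < w) :
    IntervalIntegrable (fun s => s ^ r * f s) volume u w :=
  hf.intervalIntegrable.continuousOn_mul <| continuousOn_id.rpow_const fun _ hs =>
    .inl (lt_min hu hw |>.trans_le hs.1).ne'

lemma rpow_sub_rpow_div_mul_le_integral (ha : a ≠ 0) (hf : Antitone f) (hu : 0 < u)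
    (huw : u ≤ w) : (w ^ a - u ^ a) / a * f w ≤ ∫ s in u..w, s ^ (a - 1) * f s := by
  have hw : 0 < w := hu.trans_le huw
  have h0 : (0 : ℝ) ∉ uIcc u w := fun h => (lt_min hu hw).not_ge h.1
  have hpow : ∫ s in u..w, s ^ (a - 1) = (w ^ a - u ^ a) / a := by
    rw [integral_rpow (.inr ⟨by contrapose! ha; linarith, h0⟩), sub_add_cancel]
  rw [← hpow, ← intervalIntegral.integral_mul_const]
  refine intervalIntegral.integral_mono_on huw
    ((intervalIntegral.intervalIntegrable_rpow (.inr h0)).mul_const _)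
    (intervalIntegrable_rpow_mul_of_antitone hf hu hw)
    fun s hs => mul_le_mul_of_nonneg_left (hf hs.2) (rpow_nonneg (hu.le.trans hs.1) _)

lemma dyadic_block_le_integral (ha : a ≠ 0) (hf : Antitone f) (hw : 0 < w) :
    (1 - 2 ^ (-a)) / a * (w ^ a * f w) ≤ ∫ s in (w / 2)..w, s ^ (a - 1) * f s := by
  convert rpow_sub_rpow_div_mul_le_integral ha hf (half_pos hw) (half_le_self hw.le) using 1
  rw [div_rpow hw.le zero_le_two, rpow_neg zero_le_two]
  field_simp

lemma dyadic_sum_le_integral (ha : a ≠ 0) (hf : Antitone f) (K : ℕ) :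
    (1 - 2 ^ (-a)) / a * ∑ k ∈ Finset.Icc 1 K, ((2 : ℝ) ^ k) ^ a * f (2 ^ k) ≤
      ∫ s in (1 : ℝ)..2 ^ K, s ^ (a - 1) * f s := by
  induction K with
  | zero => simp
  | succ K ih =>
    have h2K : (0 : ℝ) < 2 ^ K := pow_pos two_pos K
    have hblock := dyadic_block_le_integral ha hf (pow_pos two_pos (K + 1))
    rw [pow_succ, mul_div_cancel_right₀ _ two_ne_zero] at hblock
    rw [Finset.sum_Icc_succ_top (by omega), mul_add,
      ← intervalIntegral.integral_add_adjacent_intervals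
        (intervalIntegrable_rpow_mul_of_antitone hf one_pos h2K)
        (intervalIntegrable_rpow_mul_of_antitone hf h2K (pow_pos two_pos (K + 1)))]
    exact add_le_add ih hblock

lemma integral_le_setIntegral_Ioc {u' w' : ℝ} (hf : Antitone f) (hf0 : ∀ s, 0 ≤ f s)
    (hu : 0 < u) (hu' : u ≤ u') (huw' : u' ≤ w') (hw : w' ≤ w) :
    ∫ s in u'..w', s ^ r * f s ≤ ∫ s in Ioc u w, s ^ r * f s := by
  rw [intervalIntegral.integral_of_le huw']
  refine setIntegral_mono_set ?_ ?_ (Ioc_subset_Ioc hu' hw).eventuallyLE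
  · exact (intervalIntegrable_iff_integrableOn_Ioc_of_le (hu'.trans huw' |>.trans hw)).1
      (intervalIntegrable_rpow_mul_of_antitone hf hu (by linarith))
  · filter_upwards [self_mem_ae_restrict measurableSet_Ioc] with s hs
    exact mul_nonneg (rpow_nonneg (hu.trans hs.1).le _) (hf0 s)

end DyadicBlocks

/-- The composite estimate of Lemma 3.3: for `a > 0` there is `C > 0` (depending only on
`a`) such that for every `d ≥ 1`, every `v ≥ 2` and every nondecreasing
`ρ : ℝ → [0,∞)`, with `K = ⌊log₂ v⌋`,
`v^a ∫_0^1 (e^{−tv} + ∑_{k=1}^K e^{−tv/2^k} e^{−ρ(2^k)²/(2d)} + e^{−ρ(v)²/(2d)}) t^{a−1} dt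
  ≤ C (1 + ∫_1^v s^{a−1} e^{−ρ(s)²/(2d)} ds)`. -/
theorem composite_dyadic_estimate (a : ℝ) (ha : 0 < a) :
    ∃ C > (0 : ℝ), ∀ d : ℕ, 1 ≤ d → ∀ v : ℝ, 2 ≤ v → ∀ ρ : ℝ → ℝ,
      Monotone ρ → (∀ s, 0 ≤ ρ s) →
      v ^ a *
          ∫ t in Set.Ioc (0 : ℝ) 1,
            (Real.exp (-t * v) +
              (∑ k ∈ Finset.Icc 1 ⌊Real.logb 2 v⌋₊,
                Real.exp (-t * v / 2 ^ k) *
                  Real.exp (-(ρ ((2 : ℝ) ^ k)) ^ 2 / (2 * (d : ℝ)))) +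
              Real.exp (-(ρ v) ^ 2 / (2 * (d : ℝ)))) * t ^ (a - 1) ≤
        C * (1 + ∫ s in Set.Ioc (1 : ℝ) v,
          s ^ (a - 1) * Real.exp (-(ρ s) ^ 2 / (2 * (d : ℝ)))) := by
  set c := (1 - (2 : ℝ) ^ (-a)) / a
  have hc : 0 < c :=
    div_pos (sub_pos.2 (rpow_lt_one_of_one_lt_of_neg one_lt_two (neg_neg_of_pos ha))) ha
  refine ⟨Gamma a + Gamma a / c + 1 / (a * c), by positivity, fun d _ v hv ρ hρ hρ0 => ?_⟩
  set E : ℝ → ℝ := fun s => exp (-ρ s ^ 2 / (2 * d))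
  have hE : Antitone E := antitone_exp_neg_sq_div hρ hρ0 (by positivity)
  have hE0 (s : ℝ) : 0 ≤ E s := (exp_pos _).le
  set K := ⌊logb 2 v⌋₊
  set I := ∫ s in Ioc 1 v, s ^ (a - 1) * E s
  have hv0 : 0 < v := by linarith
  have hI : 0 ≤ I := setIntegral_nonneg measurableSet_Ioc fun s hs =>
    mul_nonneg (rpow_nonneg (zero_le_one.trans hs.1.le) _) (hE0 s)
  have hsum : c * ∑ k ∈ Finset.Icc 1 K, ((2 : ℝ) ^ k) ^ a * E (2 ^ k) ≤ I :=
    (dyadic_sum_le_integral ha.ne' hE K).trans <| integral_le_setIntegral_Ioc hE hE0 one_pos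
      le_rfl (one_le_pow₀ one_le_two) (pow_natFloor_logb_le one_lt_two (by linarith))
  have htop : c * (v ^ a * E v) ≤ I :=
    (dyadic_block_le_integral ha.ne' hE hv0).trans <| integral_le_setIntegral_Ioc hE hE0 one_pos
      (by linarith) (by linarith) le_rfl
  have hfirst :=
    rpow_mul_setIntegral_exp_neg_mul_mul_rpow_le_Gamma ha hv0 (s := Ioc 0 1) Ioc_subset_Ioi_self
  have hmid := rpow_mul_sum_mul_setIntegral_exp_le_Gamma_mul_sum ha hv0 (Finset.Icc 1 K)
    fun k => hE0 (2 ^ k)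
  rw [setIntegral_Ioc_zero_one_dyadic_sum_mul_rpow (by linarith), sub_add_cancel]
  have hS := (le_div_iff₀' hc).2 hsum
  have hT := (le_div_iff₀' hc).2 htop
  calc _ ≤ Gamma a + Gamma a * (I / c) + I / c / a := by
        rw [mul_add, mul_add, mul_div_assoc']
        exact add_le_add (add_le_add hfirst (hmid.trans (by gcongr)))
          (div_le_div_of_nonneg_right hT ha.le)
    _ ≤ Gamma a + Gamma a * (I / c) + I / c / a + (Gamma a * I + Gamma a / c + 1 / (a * c)) :=
        le_add_of_nonneg_right (by positivity)
    _ = (Gamma a + Gamma a / c + 1 / (a * c)) * (1 + I) := by clear_value c I; ring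
end

section
/- Let d ≥ 1 be an integer, let β > 1, N > 0 and 0 < m ≤ M be real numbers, and let V : ℝ^d → ℝ satisfy m·β^{‖y‖} ≤ V(y) ≤ M·β^{‖y‖} for all y with ‖y‖ ≥ N. Then for every x with ‖x‖ ≥ 2N, every real s ≥ (2M/m)², and every y with ‖x−y‖ ≤ (1/2)·min(‖x‖, log s / log β), one has V(y) ≥ 2V(x)/s. -/
/-!
Write `L = log_β s`. The hypothesis `‖x - y‖ ≤ ‖x‖/2` keeps `y` in the region `‖y‖ ≥ N` where
both growth bounds hold, and `‖x - y‖ ≤ L/2` gives `β^{‖y‖} ≥ β^{‖x‖ - L/2} = β^{‖x‖}/√s`.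
Hence `V y ≥ m β^{‖x‖}/√s ≥ 2M β^{‖x‖}/s ≥ 2 V x / s`, the middle step being `√s ≥ 2M/m`.
-/

namespace Real

theorem rpow_logb_div_two {β s : ℝ} (hβ₀ : 0 < β) (hβ₁ : β ≠ 1) (hs : 0 < s) :
    β ^ (logb β s / 2) = √s := by
  rw [sqrt_eq_rpow, ← rpow_logb hβ₀ hβ₁ hs, ← rpow_mul hβ₀.le, rpow_logb hβ₀ hβ₁ hs,
    div_eq_mul_one_div]

theorem two_mul_div_le_div_sqrt {m M s : ℝ} (hm : 0 < m) (hs : (2 * M / m) ^ 2 ≤ s) :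
    2 * M / s ≤ m / √s := by
  have hs₀ : 0 ≤ s := (sq_nonneg _).trans hs
  calc 2 * M / s = 2 * M / m * (m / s) := by field_simp
    _ ≤ √s * (m / s) := by gcongr; exact le_sqrt_of_sq_le hs
    _ = m / √s := by rw [mul_div_left_comm, sqrt_div_self, div_eq_mul_inv]

end Real

open Real in
theorem rho_lower_bound_exponential_potential_general (d : ℕ) (β N m M : ℝ)
    (hβ : 1 < β) (hm : 0 < m) (hmM : m ≤ M)
    (V : EuclideanSpace ℝ (Fin d) → ℝ)
    (hV : ∀ y : EuclideanSpace ℝ (Fin d), N ≤ ‖y‖ →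
      m * β ^ ‖y‖ ≤ V y ∧ V y ≤ M * β ^ ‖y‖) :
    ∀ x : EuclideanSpace ℝ (Fin d), 2 * N ≤ ‖x‖ →
      ∀ s : ℝ, (2 * M / m) ^ 2 ≤ s →
        ∀ y : EuclideanSpace ℝ (Fin d),
          ‖x - y‖ ≤ (1 / 2) * min ‖x‖ (Real.log s / Real.log β) →
          2 * V x / s ≤ V y := by
  intro x hx s hs y hy
  rw [log_div_log] at hy
  have hM : 0 < M := hm.trans_le hmM
  have hs₀ : 0 < s := lt_of_lt_of_le (by positivity) hs
  have hβ₀ : 0 < β := zero_lt_one.trans hβ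
  have hNx : N ≤ ‖x‖ := by linarith [norm_nonneg x]
  have hNy : N ≤ ‖y‖ := by
    linarith [min_le_left ‖x‖ (logb β s), norm_sub_norm_le x y]
  have hLy : ‖x‖ - logb β s / 2 ≤ ‖y‖ := by
    linarith [min_le_right ‖x‖ (logb β s), norm_sub_norm_le x y]
  calc 2 * V x / s ≤ 2 * (M * β ^ ‖x‖) / s := by gcongr; exact (hV x hNx).2
    _ = 2 * M / s * β ^ ‖x‖ := by ring
    _ ≤ m / √s * β ^ ‖x‖ := by gcongr ?_ * _; exact two_mul_div_le_div_sqrt hm hs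
    _ = m * β ^ (‖x‖ - logb β s / 2) := by
      rw [rpow_sub hβ₀, rpow_logb_div_two hβ₀ hβ.ne' hs₀]; ring
    _ ≤ m * β ^ ‖y‖ := by gcongr; exact hβ.le
    _ ≤ V y := (hV y hNy).1

/-- For a potential of global exponential growth `m β^{‖y‖} ≤ V(y) ≤ M β^{‖y‖}`
(for `‖y‖ ≥ N`): for every `x` with `‖x‖ ≥ 2N`, every `s ≥ (2M/m)²` and every `y` with
`‖x−y‖ ≤ (1/2) min(‖x‖, log_β s)`, one has `V(y) ≥ 2V(x)/s`. -/
theorem rho_lower_bound_exponential_potential (d : ℕ) (hd : 1 ≤ d) (β N m M : ℝ)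
    (hβ : 1 < β) (hN : 0 < N) (hm : 0 < m) (hmM : m ≤ M)
    (V : EuclideanSpace ℝ (Fin d) → ℝ)
    (hV : ∀ y : EuclideanSpace ℝ (Fin d), N ≤ ‖y‖ →
      m * β ^ ‖y‖ ≤ V y ∧ V y ≤ M * β ^ ‖y‖) :
    ∀ x : EuclideanSpace ℝ (Fin d), 2 * N ≤ ‖x‖ →
      ∀ s : ℝ, (2 * M / m) ^ 2 ≤ s →
        ∀ y : EuclideanSpace ℝ (Fin d),
          ‖x - y‖ ≤ (1 / 2) * min ‖x‖ (Real.log s / Real.log β) →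
          2 * V x / s ≤ V y :=
  rho_lower_bound_exponential_potential_general d β N m M hβ hm hmM V hV
end

section
/- Let d ≥ 1 be an integer, let β > 1, N > 0 and 0 < m ≤ M be real numbers, and let V : ℝ^d → ℝ satisfy V(y) ≤ M·β^{‖y‖} for all y ∈ ℝ^d and V(x) ≥ m·β^{‖x‖} for all x with ‖x‖ ≥ N. Then for every x with ‖x‖ ≥ N, every real s ≥ (2M/m)², and every y with ‖x−y‖ ≤ (1/2)·(log s / log β), one has V(y) ≤ s·V(x)/2. -/
namespace Real

lemma rpow_norm_le_rpow_norm_mul_rpow_norm_sub {E : Type*} [SeminormedAddCommGroup E]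
    {β : ℝ} (hβ : 1 ≤ β) (x y : E) : β ^ ‖y‖ ≤ β ^ ‖x‖ * β ^ ‖x - y‖ := by
  rw [← rpow_add (by linarith)]
  refine rpow_le_rpow_of_exponent_le hβ ?_
  simpa using norm_sub_le x (x - y)

lemma rpow_le_sqrt_of_le_half_mul_logb {β s t : ℝ} (hβ : 1 < β) (hs : 0 < s)
    (ht : t ≤ 1 / 2 * (log s / log β)) : β ^ t ≤ √s := by
  have hβ0 : 0 < β := by linarith
  calc β ^ t ≤ β ^ (logb β s * (1 / 2)) := by
        refine rpow_le_rpow_of_exponent_le hβ.le ?_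
        rwa [logb, mul_comm]
    _ = √s := by rw [rpow_mul hβ0.le, rpow_logb hβ0 hβ.ne' hs, sqrt_eq_rpow]

lemma two_mul_le_sqrt_mul_of_sq_div_le {M m s : ℝ} (hm : 0 < m)
    (hs : (2 * M / m) ^ 2 ≤ s) : 2 * M ≤ √s * m := by
  have h : 2 * M / m ≤ √s :=
    (le_abs_self _).trans ((sqrt_sq_eq_abs _).symm.trans_le (sqrt_le_sqrt hs))
  exact (div_le_iff₀ hm).mp h

end Real

open Real

/-- Multiplying `‖x - y‖ ≤ ½ log_β s` out gives `β ^ ‖y‖ ≤ √s β ^ ‖x‖`, and `√s ≥ 2M/m` absorbs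
the ratio of the two growth constants into the other factor `√s`. -/
lemma le_mul_div_two_of_exp_growth {E : Type*} [SeminormedAddCommGroup E] {V : E → ℝ}
    {β m M s : ℝ} (hβ : 1 < β) (hm : 0 < m) (hV_upper : ∀ y, V y ≤ M * β ^ ‖y‖) {x : E}
    (hx : m * β ^ ‖x‖ ≤ V x) (hs : (2 * M / m) ^ 2 ≤ s) {y : E}
    (hy : ‖x - y‖ ≤ 1 / 2 * (log s / log β)) : V y ≤ s * V x / 2 := by
  have hβx : 0 < β ^ ‖x‖ := rpow_pos_of_pos (by linarith) _
  have hM : 0 < M := pos_of_mul_pos_left ((mul_pos hm hβx).trans_le (hx.trans (hV_upper x))) hβx.le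
  have hs0 : 0 < s := (by positivity : 0 < (2 * M / m) ^ 2).trans_le hs
  have hsqrt : √s * √s = s := mul_self_sqrt hs0.le
  calc V y ≤ M * β ^ ‖y‖ := hV_upper y
    _ ≤ M * (β ^ ‖x‖ * β ^ ‖x - y‖) := by
        gcongr; exact rpow_norm_le_rpow_norm_mul_rpow_norm_sub hβ.le x y
    _ ≤ M * (β ^ ‖x‖ * √s) := by gcongr; exact rpow_le_sqrt_of_le_half_mul_logb hβ hs0 hy
    _ = 2 * M * (√s * β ^ ‖x‖) / 2 := by ring
    _ ≤ √s * m * (√s * β ^ ‖x‖) / 2 := by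
        gcongr ?_ * _ / _; exact two_mul_le_sqrt_mul_of_sq_div_le hm hs
    _ = s * (m * β ^ ‖x‖) / 2 := by linear_combination m * β ^ ‖x‖ / 2 * hsqrt
    _ ≤ s * V x / 2 := by gcongr

theorem sigma_lower_bound_exponential_potential_general (d : ℕ) (β N m M : ℝ)
    (hβ : 1 < β) (hm : 0 < m)
    (V : EuclideanSpace ℝ (Fin d) → ℝ)
    (hV_upper : ∀ y : EuclideanSpace ℝ (Fin d), V y ≤ M * β ^ ‖y‖)
    (hV_lower : ∀ x : EuclideanSpace ℝ (Fin d), N ≤ ‖x‖ → m * β ^ ‖x‖ ≤ V x) :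
    ∀ x : EuclideanSpace ℝ (Fin d), N ≤ ‖x‖ →
      ∀ s : ℝ, (2 * M / m) ^ 2 ≤ s →
        ∀ y : EuclideanSpace ℝ (Fin d),
          ‖x - y‖ ≤ (1 / 2) * (Real.log s / Real.log β) →
          V y ≤ s * V x / 2 :=
  fun x hx _ hs _ hy => le_mul_div_two_of_exp_growth hβ hm hV_upper (hV_lower x hx) hs hy

/-- For a potential with `V(y) ≤ M β^{‖y‖}` everywhere and `V(x) ≥ m β^{‖x‖}` for
`‖x‖ ≥ N`: for every `x` with `‖x‖ ≥ N`, every `s ≥ (2M/m)²` and every `y` with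
`‖x−y‖ ≤ (1/2) log_β s`, one has `V(y) ≤ s V(x)/2`. -/
theorem sigma_lower_bound_exponential_potential (d : ℕ) (hd : 1 ≤ d) (β N m M : ℝ)
    (hβ : 1 < β) (hN : 0 < N) (hm : 0 < m) (hmM : m ≤ M)
    (V : EuclideanSpace ℝ (Fin d) → ℝ)
    (hV_upper : ∀ y : EuclideanSpace ℝ (Fin d), V y ≤ M * β ^ ‖y‖)
    (hV_lower : ∀ x : EuclideanSpace ℝ (Fin d), N ≤ ‖x‖ → m * β ^ ‖x‖ ≤ V x) :
    ∀ x : EuclideanSpace ℝ (Fin d), N ≤ ‖x‖ →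
      ∀ s : ℝ, (2 * M / m) ^ 2 ≤ s →
        ∀ y : EuclideanSpace ℝ (Fin d),
          ‖x - y‖ ≤ (1 / 2) * (Real.log s / Real.log β) →
          V y ≤ s * V x / 2 :=
  sigma_lower_bound_exponential_potential_general d β N m M hβ hm V hV_upper hV_lower
end

section
/- Let d ≥ 1 be an integer, let α > 0, N > 0, C ≥ 0 and 0 < m ≤ M be real numbers, and let V : ℝ^d → ℝ satisfy V(y) ≤ M‖y‖^α for all y with ‖y‖ ≥ N, V(y) ≤ C for all y with ‖y‖ < N, and V(x) ≥ m‖x‖^α for all x with ‖x‖ ≥ N. Then there exist ε > 0 and s₀ ≥ 1 such that for every x with ‖x‖ ≥ N, every real s ≥ s₀, and every y with ‖x−y‖ ≤ ε·‖x‖·s^{1/α}, one has V(y) ≤ s·V(x)/2. -/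
/-!
Put `t = s^{1/α}`. Once `s` is so large that `ε t ≥ 1`, every `y` with `‖x - y‖ ≤ ε ‖x‖ t`
satisfies `‖y‖ ≤ 2ε ‖x‖ t`, hence `‖y‖^α ≤ (2ε)^α ‖x‖^α s`. If `‖y‖ ≥ N`, the upper power bound
gives `V y ≤ M (2ε)^α s ‖x‖^α`, which is at most `s m ‖x‖^α / 2` for `(2ε)^α = m / (2M)`. If
`‖y‖ < N`, then `V y ≤ C ≤ s m N^α / 2` as soon as `s` is large. In both cases the lower power
bound `m ‖x‖^α ≤ V x` finishes the proof.
-/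

theorem norm_le_two_mul_of_norm_sub_le {E : Type*} [SeminormedAddGroup E] {x y : E} {r : ℝ}
    (hr : 1 ≤ r) (h : ‖x - y‖ ≤ r * ‖x‖) : ‖y‖ ≤ 2 * r * ‖x‖ := by
  nlinarith [norm_le_norm_add_norm_sub x y, norm_nonneg x]

theorem one_le_mul_rpow_one_div {ε s α : ℝ} (hα : 0 < α) (hε : 0 < ε) (hs : ε⁻¹ ^ α ≤ s) :
    1 ≤ ε * s ^ (1 / α) := by
  have hs₀ : 0 ≤ s := le_trans (by positivity) hs
  have hεs : ε⁻¹ ≤ s ^ α⁻¹ := (Real.le_rpow_inv_iff_of_pos (by positivity) hs₀ hα).2 hs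
  calc 1 = ε * ε⁻¹ := (mul_inv_cancel₀ hε.ne').symm
    _ ≤ ε * s ^ (1 / α) := by rw [one_div]; gcongr

theorem rpow_le_rpow_mul_of_le_mul_rpow_one_div {u c s α : ℝ} (hα : 0 < α) (hu : 0 ≤ u)
    (hc : 0 ≤ c) (hs : 0 ≤ s) (h : u ≤ c * s ^ (1 / α)) : u ^ α ≤ c ^ α * s :=
  calc u ^ α ≤ (c * s ^ (1 / α)) ^ α := Real.rpow_le_rpow hu h hα.le
    _ = c ^ α * s := by
      rw [Real.mul_rpow hc (by positivity), one_div, Real.rpow_inv_rpow hs hα.ne']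

theorem sigma_lower_bound_power_potential_general (d : ℕ) (α N C m M : ℝ)
    (hα : 0 < α) (hN : 0 < N) (hm : 0 < m) (hmM : m ≤ M)
    (V : EuclideanSpace ℝ (Fin d) → ℝ)
    (hV_upper : ∀ y : EuclideanSpace ℝ (Fin d), N ≤ ‖y‖ → V y ≤ M * ‖y‖ ^ α)
    (hV_bdd : ∀ y : EuclideanSpace ℝ (Fin d), ‖y‖ < N → V y ≤ C)
    (hV_lower : ∀ x : EuclideanSpace ℝ (Fin d), N ≤ ‖x‖ → m * ‖x‖ ^ α ≤ V x) :
    ∃ ε > (0 : ℝ), ∃ s₀ ≥ (1 : ℝ),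
      ∀ x : EuclideanSpace ℝ (Fin d), N ≤ ‖x‖ →
        ∀ s : ℝ, s₀ ≤ s →
          ∀ y : EuclideanSpace ℝ (Fin d), ‖x - y‖ ≤ ε * ‖x‖ * s ^ (1 / α) →
            V y ≤ s * V x / 2 := by
  have hM : 0 < M := hm.trans_le hmM
  obtain ⟨c, hc, hcα⟩ : ∃ c > 0, c ^ α = m / (2 * M) :=
    ⟨_, by positivity, Real.rpow_inv_rpow (by positivity) hα.ne'⟩
  refine ⟨c / 2, by positivity, max (max 1 ((c / 2)⁻¹ ^ α)) (2 * C / (m * N ^ α)),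
    le_max_of_le_left (le_max_left _ _), fun x hx s hs y hy => ?_⟩
  simp only [max_le_iff] at hs
  obtain ⟨⟨hs₁, hsε⟩, hsC⟩ := hs
  have hs₀ : 0 ≤ s := zero_le_one.trans hs₁
  have hy' : ‖y‖ ≤ c * ‖x‖ * s ^ (1 / α) := by
    have := norm_le_two_mul_of_norm_sub_le
      (one_le_mul_rpow_one_div hα (by positivity) hsε) (by rwa [mul_right_comm] at hy)
    linarith
  have hVy : V y ≤ s * (m * ‖x‖ ^ α) / 2 := by
    rcases lt_or_ge ‖y‖ N with hyN | hyN
    · have hNx : N ^ α ≤ ‖x‖ ^ α := Real.rpow_le_rpow hN.le hx hα.le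
      have hCs : 2 * C ≤ s * (m * N ^ α) := (div_le_iff₀ (by positivity)).1 hsC
      nlinarith [hV_bdd y hyN, mul_le_mul_of_nonneg_left hNx (mul_nonneg hs₀ hm.le)]
    · have hyα := rpow_le_rpow_mul_of_le_mul_rpow_one_div hα (norm_nonneg y)
        (by positivity) hs₀ hy'
      calc V y ≤ M * ‖y‖ ^ α := hV_upper y hyN
        _ ≤ M * ((c * ‖x‖) ^ α * s) := by gcongr
        _ = s * (M * c ^ α * ‖x‖ ^ α) := by rw [Real.mul_rpow hc.le (norm_nonneg x)]; ring
        _ = s * (m * ‖x‖ ^ α) / 2 := by rw [hcα]; field_simp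
  have hVx := hV_lower x hx
  calc V y ≤ s * (m * ‖x‖ ^ α) / 2 := hVy
    _ ≤ s * V x / 2 := by gcongr

/-- For a potential of global power growth (`V(y) ≤ M‖y‖^α` for `‖y‖ ≥ N`,
`V(y) ≤ C` for `‖y‖ < N`, `V(x) ≥ m‖x‖^α` for `‖x‖ ≥ N`): there exist `ε > 0` and
`s₀ ≥ 1` such that for every `x` with `‖x‖ ≥ N`, every `s ≥ s₀` and every `y` with
`‖x−y‖ ≤ ε‖x‖ s^{1/α}`, one has `V(y) ≤ sV(x)/2`. -/
theorem sigma_lower_bound_power_potential (d : ℕ) (hd : 1 ≤ d) (α N C m M : ℝ)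
    (hα : 0 < α) (hN : 0 < N) (hC : 0 ≤ C) (hm : 0 < m) (hmM : m ≤ M)
    (V : EuclideanSpace ℝ (Fin d) → ℝ)
    (hV_upper : ∀ y : EuclideanSpace ℝ (Fin d), N ≤ ‖y‖ → V y ≤ M * ‖y‖ ^ α)
    (hV_bdd : ∀ y : EuclideanSpace ℝ (Fin d), ‖y‖ < N → V y ≤ C)
    (hV_lower : ∀ x : EuclideanSpace ℝ (Fin d), N ≤ ‖x‖ → m * ‖x‖ ^ α ≤ V x) :
    ∃ ε > (0 : ℝ), ∃ s₀ ≥ (1 : ℝ),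
      ∀ x : EuclideanSpace ℝ (Fin d), N ≤ ‖x‖ →
        ∀ s : ℝ, s₀ ≤ s →
          ∀ y : EuclideanSpace ℝ (Fin d), ‖x - y‖ ≤ ε * ‖x‖ * s ^ (1 / α) →
            V y ≤ s * V x / 2 :=
  sigma_lower_bound_power_potential_general d α N C m M hα hN hm hmM V hV_upper hV_bdd hV_lower
end
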